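/- There exists an absolute constant γ > 0 such that for every sequence of real numbers (η_q)_{q ≥ 1} there exists a real number θ with ‖q²θ − η_q‖ ≥ γ / (q log q) for every integer q ≥ 2. -/

import Mathlib

open Filter

/-- Distance from a real number to the nearest integer. -/
noncomputable def nint (x : ℝ) : ℝ := |x - round x|

/-!
Peres–Schlag construction. The moduli are split into blocks `[2 ^ e_j, 2 ^ e_{j+1})`, and nested
sets `U_0 = [0, 1) ⊇ U_1 ⊇ ⋯` are built: `U_{j+1}` is the union of the cells of mesh
`2 ^ (-L_{j+1})` that lie in `U_j` and on which every `q` of block `j` satisfies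
`‖q²x - η q‖ ≥ γ / (q log q)`. A point of `U_j` is lost at stage `j + 1` only if its cell meets the
bad set of some `q` of block `j`, so it lies in a slightly enlarged bad set; that set fills at most
the fraction `12 γ / (q log q)` of `U_{j-1}`, whose cells are longer than the period `1 / q²`.
Summing over the block gives `|U_j| ≤ |U_{j+1}| + (39 / 1024) |U_{j-1}|`, which keeps every `|U_j|`
positive, and a common point of the nested compact sets `closure U_j` is the required `θ`.
-/

open MeasureTheory Set Real

theorem nint_eq_norm (x : ℝ) : nint x = ‖(x : UnitAddCircle)‖ :=
  UnitAddCircle.norm_eq.symm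

@[fun_prop]
theorem continuous_nint : Continuous nint := by
  rw [funext nint_eq_norm]
  fun_prop

theorem nint_le_nint_add_abs_sub (x y : ℝ) : nint x ≤ nint y + |x - y| :=
  calc nint x ≤ |x - round y| := round_le x (round y)
    _ ≤ |x - y| + |y - round y| := abs_sub_le _ _ _
    _ = nint y + |x - y| := add_comm _ _

theorem volume_nint_lt_inter_Ico_le {Q c h : ℝ} (e a : ℝ) (hQ : 0 < Q) (hc : 0 ≤ c)
    (hc' : c ≤ 1 / 2) (hQh : 1 ≤ Q * h) :
    volume ({x | nint (Q * x - e) < c} ∩ Ico a (a + h)) ≤ ENNReal.ofReal (6 * c * h) := by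
  -- The bad set lies within `c / Q` of the solutions of `Q x - e = m`, for at most `3 Q h`
  -- integers `m`.
  set m₀ : ℤ := ⌈Q * a - e - c⌉
  set m₁ : ℤ := ⌊Q * (a + h) - e + c⌋
  have hcover : {x | nint (Q * x - e) < c} ∩ Ico a (a + h) ⊆
      ⋃ m ∈ Finset.Icc m₀ m₁, Ioo ((e + m - c) / Q) ((e + m + c) / Q) := by
    rintro x ⟨hx, hxa, hxb⟩
    have hround := abs_lt.mp (show |Q * x - e - round (Q * x - e)| < c from hx)
    have : Q * a ≤ Q * x := by gcongr
    have : Q * x < Q * (a + h) := by gcongr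
    refine mem_iUnion₂.mpr ⟨round (Q * x - e), Finset.mem_Icc.mpr
      ⟨Int.ceil_le.mpr (by linarith), Int.le_floor.mpr (by linarith)⟩, ?_, ?_⟩
    · rw [div_lt_iff₀ hQ]; linarith
    · rw [lt_div_iff₀ hQ]; linarith
  have hcard : ((Finset.Icc m₀ m₁).card : ℝ) ≤ 3 * (Q * h) := by
    have h₀ : Q * a - e - c ≤ m₀ := Int.le_ceil _
    have h₁ : (m₁ : ℝ) ≤ Q * (a + h) - e + c := Int.floor_le _
    rw [Int.card_Icc, ← Int.cast_natCast, Int.toNat_eq_max]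
    push_cast
    exact max_le (by linarith) (by linarith)
  calc volume ({x | nint (Q * x - e) < c} ∩ Ico a (a + h))
      ≤ ∑ m ∈ Finset.Icc m₀ m₁, volume (Ioo ((e + m - c) / Q) ((e + m + c) / Q)) :=
        (measure_mono hcover).trans (measure_biUnion_finset_le _ _)
    _ = ENNReal.ofReal ((Finset.Icc m₀ m₁).card * (2 * c / Q)) := by
        simp_rw [Real.volume_Ioo, ← sub_div, add_sub_sub_cancel, Finset.sum_const, nsmul_eq_mul,
          ENNReal.ofReal_mul (Nat.cast_nonneg _), ENNReal.ofReal_natCast]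
        ring_nf
    _ ≤ ENNReal.ofReal (6 * c * h) := by
        refine ENNReal.ofReal_le_ofReal ?_
        calc _ ≤ 3 * (Q * h) * (2 * c / Q) := by gcongr
          _ = 6 * c * h := by field_simp; ring

def gridCell (n k : ℕ) : Set ℝ := Ico (k / n) ((k + 1) / n)

theorem mem_gridCell_iff {n k : ℕ} {x : ℝ} (hn : 0 < n) :
    x ∈ gridCell n k ↔ 0 ≤ x ∧ ⌊x * n⌋₊ = k := by
  have hn' : (0 : ℝ) < n := Nat.cast_pos.mpr hn
  rw [gridCell, mem_Ico, div_le_iff₀ hn', lt_div_iff₀ hn']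
  constructor
  · rintro ⟨hk, hk'⟩
    have hx : 0 ≤ x * n := (Nat.cast_nonneg k).trans hk
    exact ⟨nonneg_of_mul_nonneg_left hx hn', (Nat.floor_eq_iff hx).mpr ⟨hk, hk'⟩⟩
  · rintro ⟨hx, rfl⟩
    exact ⟨Nat.floor_le (by positivity), Nat.lt_floor_add_one _⟩

theorem pairwiseDisjoint_gridCell {n : ℕ} (hn : 0 < n) (s : Set ℕ) :
    s.PairwiseDisjoint (gridCell n) := fun _ _ _ _ hkk' =>
  disjoint_left.mpr fun _ hk hk' =>
    hkk' (((mem_gridCell_iff hn).mp hk).2.symm.trans ((mem_gridCell_iff hn).mp hk').2)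

theorem gridCell_mul_subset {n d : ℕ} (hn : 0 < n) (hd : 0 < d) (k : ℕ) :
    gridCell (n * d) k ⊆ gridCell n (k / d) := by
  intro x hx
  obtain ⟨hx0, hk⟩ := (mem_gridCell_iff (Nat.mul_pos hn hd)).mp hx
  refine (mem_gridCell_iff hn).mpr ⟨hx0, ?_⟩
  rw [← hk, ← Nat.floor_div_natCast, Nat.cast_mul, ← mul_assoc,
    mul_div_cancel_right₀ _ (Nat.cast_ne_zero.mpr hd.ne')]

theorem abs_sub_lt_of_mem_gridCell {n k : ℕ} {x y : ℝ} (hx : x ∈ gridCell n k)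
    (hy : y ∈ gridCell n k) : |x - y| < 1 / n := by
  rw [gridCell, add_div] at hx hy
  rw [abs_sub_lt_iff]
  constructor <;> linarith [hx.1, hx.2, hy.1, hy.2]

open Classical in
noncomputable def gridIndices (n : ℕ) (S : Set ℝ) : Finset ℕ :=
  (Finset.range n).filter fun k => gridCell n k ⊆ S

theorem mem_gridIndices {n k : ℕ} {S : Set ℝ} :
    k ∈ gridIndices n S ↔ k < n ∧ gridCell n k ⊆ S := by
  simp [gridIndices]

noncomputable def gridInner (n : ℕ) (S : Set ℝ) : Set ℝ :=
  ⋃ k ∈ gridIndices n S, gridCell n k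

theorem gridInner_subset (n : ℕ) (S : Set ℝ) : gridInner n S ⊆ S :=
  iUnion₂_subset fun _ hk => (mem_gridIndices.mp hk).2

theorem gridInner_subset_Ico (n : ℕ) (S : Set ℝ) : gridInner n S ⊆ Ico 0 1 := by
  refine iUnion₂_subset fun k hk => Ico_subset_Ico (by positivity) ?_
  have hk : k + 1 ≤ n := (mem_gridIndices.mp hk).1
  exact div_le_one_of_le₀ (by exact_mod_cast hk) (Nat.cast_nonneg n)

theorem mem_gridInner {n : ℕ} {S : Set ℝ} {x : ℝ} (hn : 0 < n) (hx : x ∈ Ico 0 1)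
    (hS : gridCell n ⌊x * n⌋₊ ⊆ S) : x ∈ gridInner n S := by
  have hlt : ⌊x * n⌋₊ < n := by
    rw [Nat.floor_lt (by have := hx.1; positivity)]
    exact mul_lt_of_lt_one_left (by positivity) hx.2
  exact mem_biUnion (mem_gridIndices.mpr ⟨hlt, hS⟩)
    ((mem_gridCell_iff hn).mpr ⟨hx.1, rfl⟩)

theorem gridCell_subset_gridInner {n m k : ℕ} {S : Set ℝ} {x : ℝ} (hn : 0 < n) (hm : 0 < m)
    (hnm : n ∣ m) (hxk : x ∈ gridCell m k) (hx : x ∈ gridInner n S) :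
    gridCell m k ⊆ gridInner n S := by
  obtain ⟨d, rfl⟩ := hnm
  have hd : 0 < d := Nat.pos_of_mul_pos_left hm
  obtain ⟨k', hk', hxk'⟩ := mem_iUnion₂.mp hx
  have hkk' : k / d = k' := by
    have := gridCell_mul_subset hn hd k hxk
    exact ((mem_gridCell_iff hn).mp this).2.symm.trans ((mem_gridCell_iff hn).mp hxk').2
  exact fun y hy => mem_biUnion hk' (hkk' ▸ gridCell_mul_subset hn hd k hy)

theorem volume_nint_lt_inter_gridInner_le {Q c : ℝ} {n : ℕ} (e : ℝ) (S : Set ℝ) (hn : 0 < n)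
    (hQ : 0 < Q) (hc : 0 ≤ c) (hc' : c ≤ 1 / 2) (hnQ : n ≤ Q) :
    volume ({x | nint (Q * x - e) < c} ∩ gridInner n S) ≤
      ENNReal.ofReal (6 * c) * volume (gridInner n S) := by
  have hn' : (0 : ℝ) < n := Nat.cast_pos.mpr hn
  have hcell : ∀ k, gridCell n k = Ico ((k : ℝ) / n) (k / n + 1 / n) := fun k => by
    rw [gridCell, add_div]
  have hQh : 1 ≤ Q * (1 / n) := by rw [mul_one_div, one_le_div hn']; exact hnQ
  rw [gridInner, inter_iUnion₂, measure_biUnion_finset (pairwiseDisjoint_gridCell hn _)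
    fun _ _ => measurableSet_Ico, Finset.mul_sum]
  refine (measure_biUnion_finset_le _ _).trans (Finset.sum_le_sum fun k _ => ?_)
  rw [hcell, Real.volume_Ico, add_sub_cancel_left, ← ENNReal.ofReal_mul (by positivity)]
  exact volume_nint_lt_inter_Ico_le e _ hQ hc hc' hQh

theorem sum_Ico_inv_le_log_sub {a b : ℕ} (ha : 2 ≤ a) (hab : a ≤ b) :
    ∑ q ∈ Finset.Ico a b, (q : ℝ)⁻¹ ≤ log (b - 1) - log (a - 1) := by
  induction b, hab using Nat.le_induction with
  | base => simp
  | succ b hab ih =>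
    have hb : (1 : ℝ) < b := by exact_mod_cast ha.trans hab
    have hstep : (b : ℝ)⁻¹ ≤ log b - log (b - 1) := by
      rw [← log_div (by positivity) (by linarith)]
      calc (b : ℝ)⁻¹ = 1 - ((b : ℝ) / (b - 1))⁻¹ := by field_simp; ring
        _ ≤ _ := one_sub_inv_le_log_of_pos (div_pos (by positivity) (by linarith))
    rw [Finset.sum_Ico_succ_top hab, Nat.cast_add_one, add_sub_cancel_right]
    linarith

theorem sum_Ico_inv_mul_log_le {a : ℕ} (ha : 2 ≤ a) (b : ℕ) :
    ∑ q ∈ Finset.Ico a b, ((q : ℝ) * log q)⁻¹ ≤ log b / log a := by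
  rcases lt_or_ge b a with hba | hab
  · rw [Finset.Ico_eq_empty_of_le hba.le, Finset.sum_empty]
    positivity
  have ha' : (2 : ℝ) ≤ a := by exact_mod_cast ha
  have hlog_a : 0 < log a := log_pos (by linarith)
  calc ∑ q ∈ Finset.Ico a b, ((q : ℝ) * log q)⁻¹
      ≤ ∑ q ∈ Finset.Ico a b, (log a)⁻¹ * (q : ℝ)⁻¹ := by
        refine Finset.sum_le_sum fun q hq => ?_
        have hq : (a : ℝ) ≤ q := by exact_mod_cast (Finset.mem_Ico.mp hq).1
        have hq0 : (0 : ℝ) < q := by linarith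
        calc ((q : ℝ) * log q)⁻¹ ≤ ((q : ℝ) * log a)⁻¹ :=
              inv_anti₀ (mul_pos hq0 hlog_a) (by gcongr)
          _ = (log a)⁻¹ * (q : ℝ)⁻¹ := by rw [mul_inv, mul_comm]
    _ ≤ (log a)⁻¹ * (log (b - 1) - log (a - 1)) := by
        rw [← Finset.mul_sum]
        gcongr
        exact sum_Ico_inv_le_log_sub ha hab
    _ ≤ log b / log a := by
        have hb : (a : ℝ) ≤ b := by exact_mod_cast hab
        rw [div_eq_inv_mul]
        gcongr
        linarith [log_le_log (by linarith) (sub_le_self (b : ℝ) zero_le_one),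
          log_nonneg (show (1 : ℝ) ≤ a - 1 by linarith)]

-- `j - 1` truncates: at `j = 0` the hypothesis reads `m 0 ≤ m 1 + a * m 0`.
theorem pos_of_le_add_mul_pred {m : ℕ → ℝ} {a : ℝ} (ha : a ≤ 1 / 4) (h0 : 0 < m 0)
    (h : ∀ j, m j ≤ m (j + 1) + a * m (j - 1)) (j : ℕ) : 0 < m j := by
  suffices ∀ j, 0 < m j ∧ m j ≤ 2 * m (j + 1) from (this j).1
  intro j
  induction j with
  | zero => exact ⟨h0, by nlinarith [h 0]⟩
  | succ j ih =>
    obtain ⟨hpos, hle⟩ := ih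
    refine ⟨by linarith, ?_⟩
    have := h (j + 1)
    rw [Nat.add_sub_cancel] at this
    nlinarith

theorem exists_le_and_lt_succ {f : ℕ → ℕ} {q n : ℕ} (h0 : f 0 ≤ q) (hn : q < f n) :
    ∃ i, f i ≤ q ∧ q < f (i + 1) := by
  induction n with
  | zero => exact absurd hn (not_lt.mpr h0)
  | succ n ih =>
    by_cases hfn : f n ≤ q
    · exact ⟨n, hfn, hn⟩
    · exact ih (not_le.mp hfn)

namespace PeresSchlag

noncomputable def gamma : ℝ := 1 / 2 ^ 13

noncomputable def radius (q : ℕ) : ℝ := gamma / (q * log q)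

-- Tuned so that for `q ∈ block j` the stage-`j` grid is finer than the bad intervals of `q`, while
-- the cells two stages back are longer than the period `1 / q ^ 2`.
def level : ℕ → ℕ
  | 0 => 0
  | j + 1 => 91 * 2 ^ j + 13

def blockExp : ℕ → ℕ
  | 0 => 1
  | j + 1 => 26 * 2 ^ j

def block (j : ℕ) : Finset ℕ := Finset.Ico (2 ^ blockExp j) (2 ^ blockExp (j + 1))

theorem gamma_pos : 0 < gamma := by norm_num [gamma]

theorem level_le_succ (j : ℕ) : level j ≤ level (j + 1) := by
  cases j with
  | zero => exact Nat.zero_le _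
  | succ j => simp only [level, pow_succ]; omega

theorem level_pred_le (j : ℕ) : level (j - 1) ≤ 2 * blockExp j := by
  match j with
  | 0 | 1 => simp [level]
  | j + 2 =>
    have : 1 ≤ 2 ^ j := Nat.one_le_two_pow
    show level (j + 1) ≤ 2 * blockExp (j + 2)
    simp only [level, blockExp, pow_succ]
    omega

theorem blockExp_succ_le (j : ℕ) : blockExp (j + 1) ≤ 26 * blockExp j := by
  cases j with
  | zero => simp [blockExp]
  | succ j => simp only [blockExp, pow_succ]; omega

theorem blockExp_pos (j : ℕ) : 0 < blockExp j := by
  cases j with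
  | zero => simp [blockExp]
  | succ j => simp only [blockExp]; positivity

theorem two_le_of_mem_block {j q : ℕ} (hq : q ∈ block j) : 2 ≤ q :=
  (Nat.le_self_pow (blockExp_pos j).ne' 2).trans (Finset.mem_Ico.mp hq).1

theorem exists_mem_block {q : ℕ} (hq : 2 ≤ q) : ∃ j, q ∈ block j := by
  have hlt : q < 2 ^ blockExp (q + 1) :=
    Nat.lt_two_pow_self.trans_le <| Nat.pow_le_pow_right two_pos <| by
      have := @Nat.lt_two_pow_self q
      simp only [blockExp]
      omega
  obtain ⟨j, hj⟩ := exists_le_and_lt_succ (f := fun j => 2 ^ blockExp j) hq hlt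
  exact ⟨j, Finset.mem_Ico.mpr hj⟩

theorem pow_level_pred_le_sq {j q : ℕ} (hq : q ∈ block j) : 2 ^ level (j - 1) ≤ q ^ 2 :=
  calc 2 ^ level (j - 1) ≤ (2 ^ blockExp j) ^ 2 := by
        rw [← pow_mul, mul_comm]; exact Nat.pow_le_pow_right two_pos (level_pred_le j)
    _ ≤ q ^ 2 := Nat.pow_le_pow_left (Finset.mem_Ico.mp hq).1 2

theorem radius_nonneg (q : ℕ) : 0 ≤ radius q :=
  div_nonneg gamma_pos.le (by positivity)

theorem radius_le_gamma {q : ℕ} (hq : 2 ≤ q) : radius q ≤ gamma := by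
  have hq' : (2 : ℝ) ≤ q := by exact_mod_cast hq
  have : 1 ≤ (q : ℝ) * log q := by
    nlinarith [log_two_gt_d9, log_le_log two_pos hq']
  exact div_le_self gamma_pos.le this

theorem sq_div_pow_level_le_radius {j q : ℕ} (hq : q ∈ block j) :
    (q : ℝ) ^ 2 / 2 ^ level (j + 1) ≤ radius q := by
  have hq2 : (2 : ℝ) ≤ q := by exact_mod_cast two_le_of_mem_block hq
  have hqlt : (q : ℝ) < 2 ^ (26 * 2 ^ j) := by exact_mod_cast (Finset.mem_Ico.mp hq).2
  have hlog_pos : 0 < log q := log_pos (by linarith)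
  have hlog : log q ≤ 2 ^ (13 * 2 ^ j) := by
    have h26 : 26 * 2 ^ j ≤ 2 ^ (13 * 2 ^ j) := by
      have := @Nat.lt_two_pow_self (2 ^ j)
      have := Nat.one_le_two_pow (n := j)
      calc 26 * 2 ^ j ≤ 2 ^ 5 * 2 ^ (2 ^ j) := by omega
        _ = 2 ^ (2 ^ j + 5) := by ring
        _ ≤ _ := Nat.pow_le_pow_right two_pos (by omega)
    calc log q ≤ log (2 ^ (26 * 2 ^ j)) := log_le_log (by linarith) hqlt.le
      _ = (26 * 2 ^ j : ℕ) * log 2 := by rw [log_pow]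
      _ ≤ (26 * 2 ^ j : ℕ) :=
        mul_le_of_le_one_right (by positivity) (by linarith [log_two_lt_d9])
      _ ≤ 2 ^ (13 * 2 ^ j) := by exact_mod_cast h26
  have hcube : (q : ℝ) ^ 3 ≤ 2 ^ (78 * 2 ^ j) :=
    calc (q : ℝ) ^ 3 ≤ (2 ^ (26 * 2 ^ j)) ^ 3 := by gcongr
      _ = 2 ^ (78 * 2 ^ j) := by rw [← pow_mul]; ring_nf
  rw [radius, gamma, level, div_le_div_iff₀ (by positivity) (by positivity)]
  calc (q : ℝ) ^ 2 * (q * log q) = q ^ 3 * log q := by ring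
    _ ≤ 2 ^ (78 * 2 ^ j) * 2 ^ (13 * 2 ^ j) := by gcongr
    _ = 1 / 2 ^ 13 * 2 ^ (91 * 2 ^ j + 13) := by rw [← pow_add, pow_add]; ring_nf

theorem sum_radius_block_le (j : ℕ) : ∑ q ∈ block j, radius q ≤ 26 * gamma := by
  have hlog2 := log_pos one_lt_two
  have hexp : (0 : ℝ) < blockExp j := by exact_mod_cast blockExp_pos j
  calc ∑ q ∈ block j, radius q = gamma * ∑ q ∈ block j, ((q : ℝ) * log q)⁻¹ := by
        simp only [radius, div_eq_mul_inv, Finset.mul_sum]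
    _ ≤ gamma * (log (2 ^ blockExp (j + 1) : ℕ) / log (2 ^ blockExp j : ℕ)) := by
        gcongr ?_ * ?_
        · exact gamma_pos.le
        · exact sum_Ico_inv_mul_log_le (Nat.le_self_pow (blockExp_pos j).ne' 2) _
    _ = gamma * (blockExp (j + 1) / blockExp j) := by
        simp only [Nat.cast_pow, Nat.cast_ofNat, log_pow]
        field_simp
    _ ≤ 26 * gamma := by
        rw [mul_comm]
        refine mul_le_mul_of_nonneg_right ?_ gamma_pos.le
        rw [div_le_iff₀ hexp]
        exact_mod_cast blockExp_succ_le j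

section Construction

variable (η : ℕ → ℝ)

def goodSet (j : ℕ) : Set ℝ := {x | ∀ q ∈ block j, radius q ≤ nint (q ^ 2 * x - η q)}

noncomputable def survivors : ℕ → Set ℝ
  | 0 => gridInner 1 univ
  | j + 1 => gridInner (2 ^ level (j + 1)) (survivors j ∩ goodSet η j)

theorem isClosed_goodSet (j : ℕ) : IsClosed (goodSet η j) := by
  simp only [goodSet, ofPred_forall]
  exact isClosed_biInter fun q _ => isClosed_le continuous_const (by fun_prop)

theorem survivors_eq_gridInner (j : ℕ) : ∃ S, survivors η j = gridInner (2 ^ level j) S := by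
  cases j with
  | zero => exact ⟨univ, rfl⟩
  | succ j => exact ⟨_, rfl⟩

theorem survivors_zero : survivors η 0 = Ico 0 1 := by
  ext x
  simp [survivors, gridInner, gridIndices, gridCell]

theorem survivors_subset_Ico (j : ℕ) : survivors η j ⊆ Ico 0 1 := by
  obtain ⟨S, hS⟩ := survivors_eq_gridInner η j
  exact hS ▸ gridInner_subset_Ico _ S

theorem survivors_succ_subset (j : ℕ) : survivors η (j + 1) ⊆ survivors η j ∩ goodSet η j :=
  gridInner_subset _ _

theorem survivors_subset_pred (j : ℕ) : survivors η j ⊆ survivors η (j - 1) := by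
  cases j with
  | zero => exact subset_rfl
  | succ j => exact (survivors_succ_subset η j).trans inter_subset_left

theorem survivors_subset_union (j : ℕ) :
    survivors η j ⊆ survivors η (j + 1) ∪ ⋃ q ∈ block j,
      {x | nint (q ^ 2 * x - η q) < radius q + q ^ 2 / 2 ^ level (j + 1)} ∩
        survivors η (j - 1) := by
  intro x hx
  refine or_iff_not_imp_left.mpr fun hx' => ?_
  set N := 2 ^ level (j + 1)
  have hN : 0 < N := Nat.two_pow_pos _
  have hx01 := survivors_subset_Ico η j hx
  have hxcell : x ∈ gridCell N ⌊x * N⌋₊ := (mem_gridCell_iff hN).mpr ⟨hx01.1, rfl⟩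
  have hcell : gridCell N ⌊x * N⌋₊ ⊆ survivors η j := by
    obtain ⟨S, hS⟩ := survivors_eq_gridInner η j
    rw [hS] at hx ⊢
    exact gridCell_subset_gridInner (Nat.two_pow_pos _) hN (pow_dvd_pow 2 (level_le_succ j))
      hxcell hx
  obtain ⟨y, hy, hyq⟩ := not_subset.mp fun hgood =>
    hx' (mem_gridInner hN hx01 (subset_inter hcell hgood))
  simp only [goodSet, mem_ofPred_eq, not_forall, not_le] at hyq
  obtain ⟨q, hq, hyq⟩ := hyq
  refine mem_iUnion₂.mpr ⟨q, hq, ?_, survivors_subset_pred η j hx⟩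
  have hxy : |x - y| < 1 / N := abs_sub_lt_of_mem_gridCell hxcell hy
  have hNR : (N : ℝ) = 2 ^ level (j + 1) := by simp [N]
  rw [mem_ofPred_eq, ← hNR]
  calc nint (q ^ 2 * x - η q)
      ≤ nint (q ^ 2 * y - η q) + |q ^ 2 * x - η q - (q ^ 2 * y - η q)| :=
        nint_le_nint_add_abs_sub _ _
    _ = nint (q ^ 2 * y - η q) + q ^ 2 * |x - y| := by
        rw [sub_sub_sub_cancel_right, ← mul_sub, abs_mul, abs_of_nonneg (sq_nonneg _)]
    _ < radius q + q ^ 2 / N := by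
        rw [div_eq_mul_one_div (_ ^ 2 : ℝ)]
        exact add_lt_add_of_lt_of_le hyq (mul_le_mul_of_nonneg_left hxy.le (sq_nonneg _))

theorem volume_inter_survivors_pred_le {j q : ℕ} (hq : q ∈ block j) :
    volume ({x | nint (q ^ 2 * x - η q) < radius q + q ^ 2 / 2 ^ level (j + 1)} ∩
      survivors η (j - 1)) ≤ ENNReal.ofReal (12 * radius q) * volume (survivors η (j - 1)) := by
  obtain ⟨S, hS⟩ := survivors_eq_gridInner η (j - 1)
  have hq2 := two_le_of_mem_block hq
  have hfine := sq_div_pow_level_le_radius hq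
  have hr := radius_le_gamma hq2
  have hsq : ((2 ^ level (j - 1) : ℕ) : ℝ) ≤ (q : ℝ) ^ 2 := by
    exact_mod_cast pow_level_pred_le_sq hq
  rw [hS]
  have hq0 : (0 : ℝ) < q ^ 2 := pow_pos (Nat.cast_pos.mpr (by omega)) 2
  have hc : 0 ≤ radius q + q ^ 2 / 2 ^ level (j + 1) :=
    add_nonneg (radius_nonneg q) (div_nonneg (sq_nonneg _) (pow_nonneg zero_le_two _))
  refine (volume_nint_lt_inter_gridInner_le (η q) S (Nat.two_pow_pos _) hq0 hc ?_ hsq).trans ?_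
  · linarith [show gamma = 1 / 2 ^ 13 from rfl]
  · gcongr ENNReal.ofReal ?_ * _
    linarith

theorem volume_survivors_le (j : ℕ) :
    volume (survivors η j) ≤ volume (survivors η (j + 1)) +
      ENNReal.ofReal (39 / 1024) * volume (survivors η (j - 1)) := by
  calc volume (survivors η j)
      ≤ volume (survivors η (j + 1)) + ∑ q ∈ block j, volume
          ({x | nint (q ^ 2 * x - η q) < radius q + q ^ 2 / 2 ^ level (j + 1)} ∩
            survivors η (j - 1)) := by
        refine (measure_mono (survivors_subset_union η j)).trans ((measure_union_le _ _).trans ?_)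
        gcongr
        exact measure_biUnion_finset_le _ _
    _ ≤ volume (survivors η (j + 1)) +
          ∑ q ∈ block j, ENNReal.ofReal (12 * radius q) * volume (survivors η (j - 1)) := by
        gcongr with q hq
        exact volume_inter_survivors_pred_le η hq
    _ ≤ volume (survivors η (j + 1)) +
          ENNReal.ofReal (39 / 1024) * volume (survivors η (j - 1)) := by
        rw [← Finset.sum_mul, ← ENNReal.ofReal_sum_of_nonneg fun q _ =>
          mul_nonneg (by norm_num) (radius_nonneg q), ← Finset.mul_sum]
        gcongr _ + ENNReal.ofReal ?_ * _
        linarith [sum_radius_block_le j, show gamma = 1 / 2 ^ 13 from rfl]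

theorem volume_survivors_ne_top (j : ℕ) : volume (survivors η j) ≠ ⊤ :=
  measure_ne_top_of_subset (survivors_subset_Ico η j) (by simp)

theorem survivors_nonempty (j : ℕ) : (survivors η j).Nonempty := by
  have hpos : 0 < (volume (survivors η j)).toReal := by
    refine pos_of_le_add_mul_pred (m := fun j => (volume (survivors η j)).toReal)
      (a := 39 / 1024) (by norm_num) (by simp [survivors_zero]) (fun j => ?_) j
    have hfin := volume_survivors_ne_top η
    have hmul := ENNReal.mul_ne_top (ENNReal.ofReal_ne_top (r := 39 / 1024)) (hfin (j - 1))
    have h :=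
      ENNReal.toReal_mono (ENNReal.add_ne_top.mpr ⟨hfin _, hmul⟩) (volume_survivors_le η j)
    rwa [ENNReal.toReal_add (hfin _) hmul, ENNReal.toReal_mul,
      ENNReal.toReal_ofReal (by norm_num)] at h
  exact nonempty_of_measure_ne_zero (ENNReal.toReal_pos_iff.mp hpos).1.ne'

theorem nonempty_iInter_closure_survivors : (⋂ j, closure (survivors η j)).Nonempty :=
  IsCompact.nonempty_iInter_of_sequence_nonempty_isCompact_isClosed _
    (fun j => closure_mono ((survivors_succ_subset η j).trans inter_subset_left))
    (fun j => (survivors_nonempty η j).closure)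
    (isCompact_Icc.of_isClosed_subset isClosed_closure
      (closure_minimal ((survivors_subset_Ico η 0).trans Ico_subset_Icc_self) isClosed_Icc))
    fun _ => isClosed_closure

theorem closure_survivors_succ_subset (j : ℕ) : closure (survivors η (j + 1)) ⊆ goodSet η j :=
  closure_minimal ((survivors_succ_subset η j).trans inter_subset_right) (isClosed_goodSet η j)

end Construction

end PeresSchlag

/-- Inhomogeneous approximation by squares via the Peres–Schlag method. -/
theorem stmt13 : ∃ γ : ℝ, 0 < γ ∧ ∀ η : ℕ → ℝ, ∃ θ : ℝ, ∀ q : ℕ, 2 ≤ q →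
    γ / ((q : ℝ) * Real.log q) ≤ nint ((q : ℝ) ^ 2 * θ - η q) := by
  refine ⟨PeresSchlag.gamma, PeresSchlag.gamma_pos, fun η => ?_⟩
  obtain ⟨θ, hθ⟩ := PeresSchlag.nonempty_iInter_closure_survivors η
  refine ⟨θ, fun q hq => ?_⟩
  obtain ⟨j, hj⟩ := PeresSchlag.exists_mem_block hq
  exact PeresSchlag.closure_survivors_succ_subset η j (mem_iInter.mp hθ (j + 1)) q hj
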